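/- If u(t,x,y) is a smooth solution of u_t - u_xx + x u_y = 0 on the region t > t₀, and u satisfies the invariance conditions Y₁u = 0 and Y₄u = 0 (where Yᵢ act with the u∂_u part replaced by multiplication, i.e., 2(t-t₀)u_t + (x-x₀)u_x - (x₀(t-t₀)-3(y-y₀))u_y + 4u = 0 and 2(t-t₀)u_x + (t-t₀)²u_y + (x-x₀)u = 0), then there is a twice-differentiable function φ such that u(t,x,y) = (t-t₀)^{-2} exp(-(x-x₀)²/(4(t-t₀))) φ(ω) with ω = ((t-t₀)(x+x₀)-2(y-y₀))/(t-t₀)^{3/2}, and φ satisfies φ'' + (3/2)ωφ' + (3/2)φ = 0. -/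

import Mathlib

open Real
noncomputable def pd (v : ℝ × ℝ × ℝ) (f : ℝ × ℝ × ℝ → ℝ) : ℝ × ℝ × ℝ → ℝ :=
  fun p => fderiv ℝ f p v

lemma pd_contDiff {f : ℝ × ℝ × ℝ → ℝ} (hf : ContDiff ℝ (⊤ : ℕ∞) f) (v : ℝ × ℝ × ℝ) :
    ContDiff ℝ (⊤ : ℕ∞) (pd v f) := by
  have h1 : ContDiff ℝ (⊤ : ℕ∞) (fderiv ℝ f) := hf.fderiv_right (by simp)
  exact (ContinuousLinearMap.apply ℝ ℝ v).contDiff.comp h1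

lemma hasDerivAt_comp_curve {f : ℝ × ℝ × ℝ → ℝ} (hf : ContDiff ℝ (⊤ : ℕ∞) f)
    {γ : ℝ → ℝ × ℝ × ℝ} {γ' : ℝ × ℝ × ℝ} {s : ℝ} (hγ : HasDerivAt γ γ' s) :
    HasDerivAt (fun r => f (γ r)) (fderiv ℝ f (γ s) γ') s :=
  ((hf.differentiable (by simp)) (γ s)).hasFDerivAt.comp_hasDerivAt s hγ

lemma clm_triple (L : ℝ × ℝ × ℝ →L[ℝ] ℝ) (a b c : ℝ) :
    L (a, b, c) = a * L (1, 0, 0) + b * L (0, 1, 0) + c * L (0, 0, 1) := by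
  have : (a, b, c) = a • ((1:ℝ), (0:ℝ), (0:ℝ)) + b • ((0:ℝ), (1:ℝ), (0:ℝ))
      + c • ((0:ℝ), (0:ℝ), (1:ℝ)) := by
    simp [Prod.ext_iff]
  rw [this]
  simp only [map_add, map_smul, smul_eq_mul]

lemma pd_comm {f : ℝ × ℝ × ℝ → ℝ} (hf : ContDiff ℝ (⊤ : ℕ∞) f) (v w : ℝ × ℝ × ℝ)
    (p : ℝ × ℝ × ℝ) : pd w (pd v f) p = pd v (pd w f) p := by
  have hdf : ContDiff ℝ (⊤ : ℕ∞) (fderiv ℝ f) := hf.fderiv_right (by simp)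
  have key : ∀ a b : ℝ × ℝ × ℝ, pd b (pd a f) p = fderiv ℝ (fderiv ℝ f) p b a := by
    intro a b
    have : pd a f = (ContinuousLinearMap.apply ℝ ℝ a) ∘ (fderiv ℝ f) := rfl
    rw [pd, this, fderiv_comp p (ContinuousLinearMap.apply ℝ ℝ a).differentiableAt
      ((hdf.differentiable (by simp)) p)]
    simp
  rw [key, key]
  exact (hf.contDiffAt.isSymmSndFDerivAt (by rw [minSmoothness_of_isRCLikeNormedField]; exact WithTop.coe_le_coe.mpr le_top)).eq w v

lemma hasDerivAt_sec1 {f : ℝ × ℝ × ℝ → ℝ} (hf : ContDiff ℝ (⊤ : ℕ∞) f) (t x y : ℝ) :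
    HasDerivAt (fun s => f (s, x, y)) (pd (1, 0, 0) f (t, x, y)) t :=
  hasDerivAt_comp_curve hf
    ((hasDerivAt_id t).prodMk ((hasDerivAt_const t x).prodMk (hasDerivAt_const t y)))

lemma hasDerivAt_sec2 {f : ℝ × ℝ × ℝ → ℝ} (hf : ContDiff ℝ (⊤ : ℕ∞) f) (t x y : ℝ) :
    HasDerivAt (fun s => f (t, s, y)) (pd (0, 1, 0) f (t, x, y)) x :=
  hasDerivAt_comp_curve hf
    ((hasDerivAt_const x t).prodMk ((hasDerivAt_id x).prodMk (hasDerivAt_const x y)))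

lemma hasDerivAt_sec3 {f : ℝ × ℝ × ℝ → ℝ} (hf : ContDiff ℝ (⊤ : ℕ∞) f) (t x y : ℝ) :
    HasDerivAt (fun s => f (t, x, s)) (pd (0, 0, 1) f (t, x, y)) y :=
  hasDerivAt_comp_curve hf
    ((hasDerivAt_const y t).prodMk ((hasDerivAt_const y x).prodMk (hasDerivAt_id y)))

lemma deriv_sec1 {f : ℝ × ℝ × ℝ → ℝ} (hf : ContDiff ℝ (⊤ : ℕ∞) f) (t x y : ℝ) :
    deriv (fun s => f (s, x, y)) t = pd (1, 0, 0) f (t, x, y) :=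
  (hasDerivAt_sec1 hf t x y).deriv

lemma deriv_sec2 {f : ℝ × ℝ × ℝ → ℝ} (hf : ContDiff ℝ (⊤ : ℕ∞) f) (t x y : ℝ) :
    deriv (fun s => f (t, s, y)) x = pd (0, 1, 0) f (t, x, y) :=
  (hasDerivAt_sec2 hf t x y).deriv

lemma deriv_sec3 {f : ℝ × ℝ × ℝ → ℝ} (hf : ContDiff ℝ (⊤ : ℕ∞) f) (t x y : ℝ) :
    deriv (fun s => f (t, x, s)) y = pd (0, 0, 1) f (t, x, y) :=
  (hasDerivAt_sec3 hf t x y).deriv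

/-- A smooth solution of u_t - u_xx + x u_y = 0 on {t > t₀} satisfying the invariance
conditions Y₁u = 0 and Y₄u = 0 has the form
u = (t-t₀)⁻² exp(-(x-x₀)²/(4(t-t₀))) φ(ω) with ω = ((t-t₀)(x+x₀)-2(y-y₀))/(t-t₀)^{3/2},
where φ solves φ'' + (3/2)ωφ' + (3/2)φ = 0. -/
theorem stmt13 (t₀ x₀ y₀ : ℝ) (u : ℝ → ℝ → ℝ → ℝ)
    (hu : ContDiff ℝ (⊤ : ℕ∞) (fun p : ℝ × ℝ × ℝ => u p.1 p.2.1 p.2.2))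
    (hsol : ∀ t x y : ℝ, t₀ < t →
      deriv (fun s => u s x y) t - deriv (fun s => deriv (fun r => u t r y) s) x
        + x * deriv (fun s => u t x s) y = 0)
    (hY1 : ∀ t x y : ℝ, t₀ < t →
      2 * (t - t₀) * deriv (fun s => u s x y) t
        + (x - x₀) * deriv (fun s => u t s y) x
        - (x₀ * (t - t₀) - 3 * (y - y₀)) * deriv (fun s => u t x s) y
        + 4 * u t x y = 0)
    (hY4 : ∀ t x y : ℝ, t₀ < t →
      2 * (t - t₀) * deriv (fun s => u t s y) x
        + (t - t₀) ^ 2 * deriv (fun s => u t x s) y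
        + (x - x₀) * u t x y = 0) :
    ∃ φ : ℝ → ℝ, (Differentiable ℝ φ ∧ Differentiable ℝ (deriv φ)) ∧
      (∀ ω : ℝ, deriv (deriv φ) ω + 3 / 2 * ω * deriv φ ω + 3 / 2 * φ ω = 0) ∧
      (∀ t x y : ℝ, t₀ < t →
        u t x y = ((t - t₀) ^ 2)⁻¹ * Real.exp (-(x - x₀) ^ 2 / (4 * (t - t₀))) *
          φ (((t - t₀) * (x + x₀) - 2 * (y - y₀)) / (t - t₀) ^ ((3 : ℝ) / 2))) := by
  set U : ℝ × ℝ × ℝ → ℝ := fun p => u p.1 p.2.1 p.2.2 with hU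
  -- translated hypotheses
  have hY4' : ∀ t x y : ℝ, t₀ < t →
      2 * (t - t₀) * pd (0,1,0) U (t,x,y) + (t - t₀) ^ 2 * pd (0,0,1) U (t,x,y)
        + (x - x₀) * U (t,x,y) = 0 := by
    intro t x y ht
    have h2 : deriv (fun s => u t s y) x = pd (0,1,0) U (t,x,y) := deriv_sec2 hu t x y
    have h3 : deriv (fun s => u t x s) y = pd (0,0,1) U (t,x,y) := deriv_sec3 hu t x y
    have := hY4 t x y ht
    rw [h2, h3] at this
    exact this
  have hY1' : ∀ t x y : ℝ, t₀ < t →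
      2 * (t - t₀) * pd (1,0,0) U (t,x,y) + (x - x₀) * pd (0,1,0) U (t,x,y)
        - (x₀ * (t - t₀) - 3 * (y - y₀)) * pd (0,0,1) U (t,x,y) + 4 * U (t,x,y) = 0 := by
    intro t x y ht
    have h1 : deriv (fun s => u s x y) t = pd (1,0,0) U (t,x,y) := deriv_sec1 hu t x y
    have h2 : deriv (fun s => u t s y) x = pd (0,1,0) U (t,x,y) := deriv_sec2 hu t x y
    have h3 : deriv (fun s => u t x s) y = pd (0,0,1) U (t,x,y) := deriv_sec3 hu t x y
    have := hY1 t x y ht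
    rw [h1, h2, h3] at this
    exact this
  have hsol' : ∀ t x y : ℝ, t₀ < t →
      pd (1,0,0) U (t,x,y) - pd (0,1,0) (pd (0,1,0) U) (t,x,y)
        + x * pd (0,0,1) U (t,x,y) = 0 := by
    intro t x y ht
    have h1 : deriv (fun s => u s x y) t = pd (1,0,0) U (t,x,y) := deriv_sec1 hu t x y
    have h3 : deriv (fun s => u t x s) y = pd (0,0,1) U (t,x,y) := deriv_sec3 hu t x y
    have hin : (fun s => deriv (fun r => u t r y) s) = fun s => pd (0,1,0) U (t,s,y) :=
      funext fun s => deriv_sec2 hu t s y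
    have h2 : deriv (fun s => deriv (fun r => u t r y) s) x
        = pd (0,1,0) (pd (0,1,0) U) (t,x,y) := by
      rw [hin]; exact deriv_sec2 (pd_contDiff hu _) t x y
    have := hsol t x y ht
    rw [h1, h2, h3] at this
    exact this
  -- Step A: flow along Y4 at fixed time
  have stepA : ∀ t x y : ℝ, t₀ < t →
      u t x y * Real.exp ((x - x₀) ^ 2 / (4 * (t - t₀)))
        = u t x₀ (y + (t - t₀) * (x₀ - x) / 2) := by
    intro t x y ht
    have hc0 : 0 < t - t₀ := sub_pos.mpr ht
    have key : ∀ s : ℝ, HasDerivAt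
        (fun s => U (t, x + 2 * (t - t₀) * s, y + (t - t₀) ^ 2 * s)
          * Real.exp ((x + 2 * (t - t₀) * s - x₀) ^ 2 / (4 * (t - t₀)))) 0 s := by
      intro s
      have hcurve : HasDerivAt
          (fun s : ℝ => ((t, x + 2 * (t - t₀) * s, y + (t - t₀) ^ 2 * s) : ℝ × ℝ × ℝ))
          (0, 2 * (t - t₀), (t - t₀) ^ 2) s := by
        refine (hasDerivAt_const s t).prodMk (HasDerivAt.prodMk ?_ ?_)
        · simpa using ((hasDerivAt_id s).const_mul (2 * (t - t₀))).const_add x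
        · simpa using ((hasDerivAt_id s).const_mul ((t - t₀) ^ 2)).const_add y
      have hg := hasDerivAt_comp_curve hu hcurve
      have hr : HasDerivAt (fun s : ℝ => x + 2 * (t - t₀) * s - x₀) (2 * (t - t₀)) s := by
        simpa using (((hasDerivAt_id s).const_mul (2 * (t - t₀))).const_add x).sub_const x₀
      have hq : HasDerivAt
          (fun s : ℝ => (x + 2 * (t - t₀) * s - x₀) ^ 2 / (4 * (t - t₀)))
          (x + 2 * (t - t₀) * s - x₀) s := by
        have h := (hr.pow 2).div_const (4 * (t - t₀))
        refine h.congr_deriv (Eq.symm ?_)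
        have : (t - t₀) ≠ 0 := ne_of_gt hc0
        field_simp
        ring
      have hE := hq.exp
      have hprod := hg.mul hE
      have hbr := hY4' t (x + 2 * (t - t₀) * s) (y + (t - t₀) ^ 2 * s) ht
      have hfd : fderiv ℝ U (t, x + 2 * (t - t₀) * s, y + (t - t₀) ^ 2 * s)
            (0, 2 * (t - t₀), (t - t₀) ^ 2)
          = 2 * (t - t₀) * pd (0,1,0) U (t, x + 2 * (t - t₀) * s, y + (t - t₀) ^ 2 * s)
            + (t - t₀) ^ 2 * pd (0,0,1) U (t, x + 2 * (t - t₀) * s, y + (t - t₀) ^ 2 * s) := by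
        rw [clm_triple]
        simp [pd]
      rw [hfd] at hprod
      refine hprod.congr_deriv (Eq.symm ?_)
      linear_combination (-Real.exp ((x + 2 * (t - t₀) * s - x₀) ^ 2 / (4 * (t - t₀)))) * hbr
    have hconst := is_const_of_deriv_eq_zero
      (fun s => (key s).differentiableAt) (fun s => (key s).deriv) 0 ((x₀ - x) / (2 * (t - t₀)))
    have hne : (t - t₀) ≠ 0 := ne_of_gt hc0
    have hx2 : x + 2 * (t - t₀) * ((x₀ - x) / (2 * (t - t₀))) = x₀ := by field_simp; ring
    have hy2 : y + (t - t₀) ^ 2 * ((x₀ - x) / (2 * (t - t₀))) = y + (t - t₀) * (x₀ - x) / 2 := by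
      field_simp
    rw [mul_zero, add_zero, hx2, hy2, sub_self] at hconst
    norm_num at hconst
    exact hconst
  -- Step B: flow along Y1 at x = x₀
  have stepB : ∀ t y : ℝ, t₀ < t →
      u t x₀ y = ((t - t₀) ^ 2)⁻¹ * u (t₀ + 1) x₀
        (y₀ + x₀ + (y - y₀ - x₀ * (t - t₀)) / (t - t₀) ^ ((3 : ℝ) / 2)) := by
    intro t y ht
    have hc0 : 0 < t - t₀ := sub_pos.mpr ht
    have hne : (t - t₀) ≠ 0 := ne_of_gt hc0
    set A : ℝ := y - y₀ - x₀ * (t - t₀) with hA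
    have key : ∀ s : ℝ, HasDerivAt
        (fun s => U (t₀ + (t - t₀) * Real.exp (2 * s), x₀,
            y₀ + A * Real.exp (3 * s) + x₀ * (t - t₀) * Real.exp (2 * s))
          * Real.exp (4 * s)) 0 s := by
      intro s
      have he2 : HasDerivAt (fun s : ℝ => Real.exp (2 * s)) (2 * Real.exp (2 * s)) s := by
        simpa [mul_comm] using ((hasDerivAt_id s).const_mul 2).exp
      have he3 : HasDerivAt (fun s : ℝ => Real.exp (3 * s)) (3 * Real.exp (3 * s)) s := by
        simpa [mul_comm] using ((hasDerivAt_id s).const_mul 3).exp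
      have he4 : HasDerivAt (fun s : ℝ => Real.exp (4 * s)) (4 * Real.exp (4 * s)) s := by
        simpa [mul_comm] using ((hasDerivAt_id s).const_mul 4).exp
      have hcurve : HasDerivAt
          (fun s : ℝ => ((t₀ + (t - t₀) * Real.exp (2 * s), x₀,
              y₀ + A * Real.exp (3 * s) + x₀ * (t - t₀) * Real.exp (2 * s)) : ℝ × ℝ × ℝ))
          ((t - t₀) * (2 * Real.exp (2 * s)), 0,
            A * (3 * Real.exp (3 * s)) + x₀ * (t - t₀) * (2 * Real.exp (2 * s))) s := by
        refine HasDerivAt.prodMk ?_ (HasDerivAt.prodMk (hasDerivAt_const s x₀) ?_)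
        · exact (he2.const_mul (t - t₀)).const_add t₀
        · exact ((he3.const_mul A).const_add y₀).add (he2.const_mul (x₀ * (t - t₀)))
      have hg := hasDerivAt_comp_curve hu hcurve
      have hprod := hg.mul he4
      have htpos : t₀ < t₀ + (t - t₀) * Real.exp (2 * s) := by
        have := Real.exp_pos (2 * s)
        nlinarith
      have hbr := hY1' (t₀ + (t - t₀) * Real.exp (2 * s)) x₀
        (y₀ + A * Real.exp (3 * s) + x₀ * (t - t₀) * Real.exp (2 * s)) htpos
      set P : ℝ × ℝ × ℝ := (t₀ + (t - t₀) * Real.exp (2 * s), x₀,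
        y₀ + A * Real.exp (3 * s) + x₀ * (t - t₀) * Real.exp (2 * s)) with hP
      have hfd : fderiv ℝ U P ((t - t₀) * (2 * Real.exp (2 * s)), 0,
            A * (3 * Real.exp (3 * s)) + x₀ * (t - t₀) * (2 * Real.exp (2 * s)))
          = (t - t₀) * (2 * Real.exp (2 * s)) * pd (1,0,0) U P
            + (A * (3 * Real.exp (3 * s)) + x₀ * (t - t₀) * (2 * Real.exp (2 * s)))
              * pd (0,0,1) U P := by
        rw [clm_triple]
        simp [pd]
      rw [hfd] at hprod
      refine hprod.congr_deriv (Eq.symm ?_)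
      linear_combination (-Real.exp (4 * s)) * hbr
    have hconst := is_const_of_deriv_eq_zero
      (fun s => (key s).differentiableAt) (fun s => (key s).deriv) 0 (-(Real.log (t - t₀)) / 2)
    -- evaluate at 0
    have e20 : Real.exp (2 * (0:ℝ)) = 1 := by norm_num
    have e30 : Real.exp (3 * (0:ℝ)) = 1 := by norm_num
    have e40 : Real.exp (4 * (0:ℝ)) = 1 := by norm_num
    rw [e20, e30, e40] at hconst
    -- evaluate at s*
    have l2 : Real.exp (2 * (-(Real.log (t - t₀)) / 2)) = (t - t₀)⁻¹ := by
      rw [show 2 * (-(Real.log (t - t₀)) / 2) = -Real.log (t - t₀) by ring,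
        Real.exp_neg, Real.exp_log hc0]
    have l3 : Real.exp (3 * (-(Real.log (t - t₀)) / 2))
        = ((t - t₀) ^ ((3 : ℝ) / 2))⁻¹ := by
      rw [show 3 * (-(Real.log (t - t₀)) / 2) = Real.log (t - t₀) * (-(3/2)) by ring,
        ← Real.rpow_def_of_pos hc0]
      rw [show (-((3:ℝ)/2)) = -((3:ℝ)/2) from rfl, Real.rpow_neg hc0.le]
    have l4 : Real.exp (4 * (-(Real.log (t - t₀)) / 2)) = ((t - t₀) ^ 2)⁻¹ := by
      rw [show 4 * (-(Real.log (t - t₀)) / 2) = -(2 * Real.log (t - t₀)) by ring,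
        Real.exp_neg]
      congr 1
      rw [show 2 * Real.log (t - t₀) = Real.log (t - t₀) * 2 by ring,
        Real.exp_mul, Real.exp_log hc0]
      norm_num
    rw [l2, l3, l4] at hconst
    have h1 : t₀ + (t - t₀) * 1 = t := by ring
    have h2 : y₀ + A * 1 + x₀ * (t - t₀) * 1 = y := by rw [hA]; ring
    have h3 : t₀ + (t - t₀) * (t - t₀)⁻¹ = t₀ + 1 := by field_simp
    have h4 : y₀ + A * ((t - t₀) ^ ((3 : ℝ) / 2))⁻¹ + x₀ * (t - t₀) * (t - t₀)⁻¹
        = y₀ + x₀ + (y - y₀ - x₀ * (t - t₀)) / (t - t₀) ^ ((3 : ℝ) / 2) := by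
      rw [hA]
      field_simp
      ring
    rw [h1, h2, h3, h4, mul_one] at hconst
    exact hconst.trans (mul_comm _ _)
  -- differentiated Y4 constraints
  have hdx4 : ∀ t x y : ℝ, t₀ < t →
      2 * (t - t₀) * pd (0,1,0) (pd (0,1,0) U) (t,x,y)
        + (t - t₀) ^ 2 * pd (0,1,0) (pd (0,0,1) U) (t,x,y)
        + (1 * U (t,x,y) + (x - x₀) * pd (0,1,0) U (t,x,y)) = 0 := by
    intro t x y ht
    have hG : HasDerivAt (fun x' : ℝ => 2 * (t - t₀) * pd (0,1,0) U (t,x',y)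
          + (t - t₀) ^ 2 * pd (0,0,1) U (t,x',y) + (x' - x₀) * U (t,x',y))
        (2 * (t - t₀) * pd (0,1,0) (pd (0,1,0) U) (t,x,y)
          + (t - t₀) ^ 2 * pd (0,1,0) (pd (0,0,1) U) (t,x,y)
          + (1 * U (t,x,y) + (x - x₀) * pd (0,1,0) U (t,x,y))) x := by
      refine HasDerivAt.add (HasDerivAt.add ?_ ?_) ?_
      · exact (hasDerivAt_sec2 (pd_contDiff hu _) t x y).const_mul (2 * (t - t₀))
      · exact (hasDerivAt_sec2 (pd_contDiff hu _) t x y).const_mul ((t - t₀) ^ 2)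
      · exact ((hasDerivAt_id x).sub_const x₀).mul (hasDerivAt_sec2 hu t x y)
    have heq : (fun x' : ℝ => 2 * (t - t₀) * pd (0,1,0) U (t,x',y)
          + (t - t₀) ^ 2 * pd (0,0,1) U (t,x',y) + (x' - x₀) * U (t,x',y))
        = fun _ : ℝ => (0:ℝ) := funext fun x' => hY4' t x' y ht
    exact (heq ▸ hG).unique (hasDerivAt_const x 0)
  have hdy4 : ∀ t x y : ℝ, t₀ < t →
      2 * (t - t₀) * pd (0,0,1) (pd (0,1,0) U) (t,x,y)
        + (t - t₀) ^ 2 * pd (0,0,1) (pd (0,0,1) U) (t,x,y)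
        + (x - x₀) * pd (0,0,1) U (t,x,y) = 0 := by
    intro t x y ht
    have hG : HasDerivAt (fun y' : ℝ => 2 * (t - t₀) * pd (0,1,0) U (t,x,y')
          + (t - t₀) ^ 2 * pd (0,0,1) U (t,x,y') + (x - x₀) * U (t,x,y'))
        (2 * (t - t₀) * pd (0,0,1) (pd (0,1,0) U) (t,x,y)
          + (t - t₀) ^ 2 * pd (0,0,1) (pd (0,0,1) U) (t,x,y)
          + (x - x₀) * pd (0,0,1) U (t,x,y)) y := by
      refine HasDerivAt.add (HasDerivAt.add ?_ ?_) ?_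
      · exact (hasDerivAt_sec3 (pd_contDiff hu _) t x y).const_mul (2 * (t - t₀))
      · exact (hasDerivAt_sec3 (pd_contDiff hu _) t x y).const_mul ((t - t₀) ^ 2)
      · exact (hasDerivAt_sec3 hu t x y).const_mul (x - x₀)
    have heq : (fun y' : ℝ => 2 * (t - t₀) * pd (0,1,0) U (t,x,y')
          + (t - t₀) ^ 2 * pd (0,0,1) U (t,x,y') + (x - x₀) * U (t,x,y'))
        = fun _ : ℝ => (0:ℝ) := funext fun y' => hY4' t x y' ht
    exact (heq ▸ hG).unique (hasDerivAt_const y 0)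
  -- the profile function
  set φ : ℝ → ℝ := fun ω => u (t₀ + 1) x₀ (y₀ + x₀ - ω / 2) with hφdef
  have ht1 : t₀ < t₀ + 1 := by linarith
  have hδ : ∀ ω : ℝ, HasDerivAt
      (fun ω : ℝ => ((t₀ + 1, x₀, y₀ + x₀ - ω / 2) : ℝ × ℝ × ℝ)) (0, 0, -(1/2)) ω := by
    intro ω
    refine (hasDerivAt_const ω _).prodMk ((hasDerivAt_const ω _).prodMk ?_)
    simpa using ((hasDerivAt_id ω).div_const 2).const_sub (y₀ + x₀)
  have hφd : ∀ ω : ℝ, HasDerivAt φ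
      (-(1/2) * pd (0,0,1) U (t₀ + 1, x₀, y₀ + x₀ - ω / 2)) ω := by
    intro ω
    have h := hasDerivAt_comp_curve hu (hδ ω)
    have hv : fderiv ℝ U (t₀ + 1, x₀, y₀ + x₀ - ω / 2) (0, 0, -(1/2))
        = -(1/2) * pd (0,0,1) U (t₀ + 1, x₀, y₀ + x₀ - ω / 2) := by
      rw [clm_triple]
      simp [pd]
    rw [hv] at h
    exact h
  have hderivφ : deriv φ
      = fun ω => -(1/2) * pd (0,0,1) U (t₀ + 1, x₀, y₀ + x₀ - ω / 2) :=
    funext fun ω => (hφd ω).deriv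
  have hφd2 : ∀ ω : ℝ, HasDerivAt (deriv φ)
      ((1/4) * pd (0,0,1) (pd (0,0,1) U) (t₀ + 1, x₀, y₀ + x₀ - ω / 2)) ω := by
    intro ω
    rw [hderivφ]
    have h := (hasDerivAt_comp_curve (pd_contDiff hu (0,0,1)) (hδ ω)).const_mul (-(1/2) : ℝ)
    have hv : fderiv ℝ (pd (0,0,1) U) (t₀ + 1, x₀, y₀ + x₀ - ω / 2) (0, 0, -(1/2))
        = -(1/2) * pd (0,0,1) (pd (0,0,1) U) (t₀ + 1, x₀, y₀ + x₀ - ω / 2) := by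
      rw [clm_triple]
      simp [pd]
    rw [hv] at h
    refine h.congr_deriv (Eq.symm ?_)
    ring
  refine ⟨φ, ⟨fun ω => (hφd ω).differentiableAt, fun ω => (hφd2 ω).differentiableAt⟩, ?_, ?_⟩
  · -- the ODE
    intro ω
    have h2 : deriv (deriv φ) ω
        = (1/4) * pd (0,0,1) (pd (0,0,1) U) (t₀ + 1, x₀, y₀ + x₀ - ω / 2) := (hφd2 ω).deriv
    have h1 : deriv φ ω = -(1/2) * pd (0,0,1) U (t₀ + 1, x₀, y₀ + x₀ - ω / 2) := (hφd ω).deriv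
    have h0 : φ ω = U (t₀ + 1, x₀, y₀ + x₀ - ω / 2) := rfl
    rw [h2, h1, h0]
    have ha := hsol' (t₀ + 1) x₀ (y₀ + x₀ - ω / 2) ht1
    have hb := hY1' (t₀ + 1) x₀ (y₀ + x₀ - ω / 2) ht1
    have hcx := hdx4 (t₀ + 1) x₀ (y₀ + x₀ - ω / 2) ht1
    have hdy := hdy4 (t₀ + 1) x₀ (y₀ + x₀ - ω / 2) ht1
    have hsw := pd_comm hu (0,0,1) (0,1,0) (t₀ + 1, x₀, y₀ + x₀ - ω / 2)
    linear_combination (-1 : ℝ) * ha + (1/2 : ℝ) * hb + (-1/2 : ℝ) * hcx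
      + (1/4 : ℝ) * hdy + (1/2 : ℝ) * hsw
  · -- the representation
    intro t x y ht
    have hc0 : 0 < t - t₀ := sub_pos.mpr ht
    have hEne : Real.exp ((x - x₀) ^ 2 / (4 * (t - t₀))) ≠ 0 := (Real.exp_pos _).ne'
    have hA := stepA t x y ht
    have hB := stepB t (y + (t - t₀) * (x₀ - x) / 2) ht
    have hstep1 : u t x y = u t x₀ (y + (t - t₀) * (x₀ - x) / 2)
        * (Real.exp ((x - x₀) ^ 2 / (4 * (t - t₀))))⁻¹ := by
      rw [← hA]
      field_simp
    have harg : y₀ + x₀ + (y + (t - t₀) * (x₀ - x) / 2 - y₀ - x₀ * (t - t₀))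
          / (t - t₀) ^ ((3 : ℝ) / 2)
        = y₀ + x₀ - ((t - t₀) * (x + x₀) - 2 * (y - y₀)) / (t - t₀) ^ ((3 : ℝ) / 2) / 2 := by
      ring
    rw [hstep1, hB, harg]
    rw [show -(x - x₀) ^ 2 / (4 * (t - t₀)) = -((x - x₀) ^ 2 / (4 * (t - t₀))) by ring,
      Real.exp_neg]
    ring
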